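/- Let h > 0, σ ≥ 0, ω ∈ ℝ with ω ≠ 0, and ξ ∈ ℝ, and suppose σ² + 2ω² − σ² cos(ξh) + 2σω sin(ξh) ≠ 0. Then the denominator of ρ(σ, ξ, ω) is nonzero and |ρ(σ, ξ, ω)|² = (σ² + 2ω² − σ² cos(ξh) − 2σω sin(ξh)) / (σ² + 2ω² − σ² cos(ξh) + 2σω sin(ξh)). -/

import Mathlib

/-!
With `a = σ/ω`, the complex number `2 + i a (1 - e^{iθ})` has real part `2 + a sin θ` and imaginary
part `a (1 - cos θ)`, so by `sin² + cos² = 1` its squared modulus is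
`2 (σ² + 2ω² - σ² cos θ + 2σω sin θ) / ω²`. The numerator of `ρ` is the case `θ = -ξh` and the
denominator the case `θ = ξh`; the factors `2/ω²` cancel in the quotient.
-/

/-- The attenuation factor
`ρ(σ, ξ, ω) = (2 + i(σ/ω)(1 − e^{−iξh})) / (2 + i(σ/ω)(1 − e^{iξh}))`. -/
noncomputable def rho (σ : ℝ) (ξ : ℂ) (ω h : ℝ) : ℂ :=
  (2 + Complex.I * ((σ : ℂ) / (ω : ℂ)) * (1 - Complex.exp (-(Complex.I * ξ * (h : ℂ))))) /
  (2 + Complex.I * ((σ : ℂ) / (ω : ℂ)) * (1 - Complex.exp (Complex.I * ξ * (h : ℂ))))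

open Complex

theorem sq_mul_normSq_two_add_I_mul_one_sub_exp (σ ω θ : ℝ) (hω : ω ≠ 0) :
    ω ^ 2 * normSq (2 + I * ((σ : ℂ) / (ω : ℂ)) * (1 - exp (θ * I))) =
      2 * (σ ^ 2 + 2 * ω ^ 2 - σ ^ 2 * Real.cos θ + 2 * σ * ω * Real.sin θ) := by
  have hcart : 2 + I * ((σ : ℂ) / (ω : ℂ)) * (1 - exp (θ * I)) =
      (((2 * ω + σ * Real.sin θ) / ω : ℝ) : ℂ) + ((σ * (1 - Real.cos θ) / ω : ℝ) : ℂ) * I := by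
    have hωC : (ω : ℂ) ≠ 0 := ofReal_ne_zero.mpr hω
    rw [exp_mul_I, ← ofReal_cos, ← ofReal_sin]
    push_cast
    field_simp
    linear_combination (-σ * sin θ) * I_sq
  rw [hcart, normSq_add_mul_I]
  field_simp
  nlinarith [Real.sin_sq_add_cos_sq θ]

theorem stmt9_general (h : ℝ) (σ : ℝ) (ω : ℝ) (hω : ω ≠ 0) (ξ : ℝ)
    (hD : σ ^ 2 + 2 * ω ^ 2 - σ ^ 2 * Real.cos (ξ * h) + 2 * σ * ω * Real.sin (ξ * h) ≠ 0) :
    (2 + Complex.I * ((σ : ℂ) / (ω : ℂ)) *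
        (1 - Complex.exp (Complex.I * (ξ : ℂ) * (h : ℂ))) ≠ 0) ∧
    (‖rho σ (ξ : ℂ) ω h‖) ^ 2 =
      (σ ^ 2 + 2 * ω ^ 2 - σ ^ 2 * Real.cos (ξ * h) - 2 * σ * ω * Real.sin (ξ * h)) /
      (σ ^ 2 + 2 * ω ^ 2 - σ ^ 2 * Real.cos (ξ * h) + 2 * σ * ω * Real.sin (ξ * h)) := by
  have hden := sq_mul_normSq_two_add_I_mul_one_sub_exp σ ω (ξ * h) hω
  have hnum := sq_mul_normSq_two_add_I_mul_one_sub_exp σ ω (-(ξ * h)) hω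
  rw [Real.cos_neg, Real.sin_neg] at hnum
  rw [show ((ξ * h : ℝ) : ℂ) * I = I * ξ * h by push_cast; ring] at hden
  rw [show ((-(ξ * h) : ℝ) : ℂ) * I = -(I * ξ * h) by push_cast; ring] at hnum
  have hne : 2 + I * ((σ : ℂ) / (ω : ℂ)) * (1 - exp (I * ξ * h)) ≠ 0 := by
    intro hzero
    rw [hzero, map_zero, mul_zero] at hden
    exact hD (by linarith)
  refine ⟨hne, ?_⟩
  rw [rho, ← normSq_eq_norm_sq, normSq_div,
    ← mul_div_mul_left _ _ (pow_ne_zero 2 hω), hnum, hden, mul_div_mul_left _ _ two_ne_zero]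
  ring

/-- explicit formula for `|ρ(σ, ξ, ω)|²` for real `ξ`. -/
theorem stmt9 (h : ℝ) (hh : 0 < h) (σ : ℝ) (hσ : 0 ≤ σ) (ω : ℝ) (hω : ω ≠ 0) (ξ : ℝ)
    (hD : σ ^ 2 + 2 * ω ^ 2 - σ ^ 2 * Real.cos (ξ * h) + 2 * σ * ω * Real.sin (ξ * h) ≠ 0) :
    (2 + Complex.I * ((σ : ℂ) / (ω : ℂ)) *
        (1 - Complex.exp (Complex.I * (ξ : ℂ) * (h : ℂ))) ≠ 0) ∧
    (‖rho σ (ξ : ℂ) ω h‖) ^ 2 =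
      (σ ^ 2 + 2 * ω ^ 2 - σ ^ 2 * Real.cos (ξ * h) - 2 * σ * ω * Real.sin (ξ * h)) /
      (σ ^ 2 + 2 * ω ^ 2 - σ ^ 2 * Real.cos (ξ * h) + 2 * σ * ω * Real.sin (ξ * h)) :=
  stmt9_general h σ ω hω ξ hD
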